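/- arXiv:1402.4892 — 7 statements merged into one kernel-verified Lean document; each statement's English description precedes it below -/
import Mathlib

section
/- Let a_1 ≤ a_2 ≤ … ≤ a_n and b_1 ≤ b_2 ≤ … ≤ b_n be positive reals with ∑ a_i = ∑ b_i. If there exists k with 1 ≤ k ≤ n−1 such that a_k ≤ b_1 and b_n ≤ a_{k+1}, then ∏ b_j ≥ ∏ a_i. -/
/-!
Take the logarithm. The a-values avoid the open interval (a_k, a_{k+1}) while the b-values lie
in [a_k, a_{k+1}], so by concavity of `log` the chord ℓ through (a_k, log a_k) and
(a_{k+1}, log a_{k+1}) lies above `log` at every a_i and below it at every b_j. As ℓ is affine and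
∑ a_i = ∑ b_j, we get ∑ log a_i ≤ ∑ ℓ(a_i) = ∑ ℓ(b_j) ≤ ∑ log b_j. When a_k = a_{k+1} the chord
degenerates and the tangent line of `log` at a_k plays its role.
-/

open Finset

lemma sub_eq_slope_mul_sub (f : ℝ → ℝ) (m x : ℝ) : f x - f m = slope f m x * (x - m) := by
  simpa [mul_comm] using (sub_smul_slope f m x).symm

namespace ConcaveOn

variable {s : Set ℝ} {f : ℝ → ℝ} {m M x : ℝ}

lemma secant_le_of_mem_Icc (hf : ConcaveOn ℝ s f) (hm : m ∈ s) (hM : M ∈ s)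
    (hx : x ∈ Set.Icc m M) : f m + slope f m M * (x - m) ≤ f x := by
  rcases hx.1.eq_or_lt with rfl | hmx
  · simp
  have hslope : slope f m M ≤ slope f m x :=
    hf.slope_anti hm ⟨hf.1.ordConnected.out hm hM hx, hmx.ne'⟩ ⟨hM, (hmx.trans_le hx.2).ne'⟩ hx.2
  nlinarith [sub_eq_slope_mul_sub f m x]

lemma le_secant_of_le_left (hf : ConcaveOn ℝ s f) (hm : m ∈ s) (hM : M ∈ s) (hx : x ∈ s)
    (hmM : m < M) (hxm : x ≤ m) : f x ≤ f m + slope f m M * (x - m) := by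
  rcases hxm.eq_or_lt with rfl | hxm
  · simp
  have hslope : slope f m M ≤ slope f m x :=
    hf.slope_anti hm ⟨hx, hxm.ne⟩ ⟨hM, hmM.ne'⟩ (hxm.le.trans hmM.le)
  nlinarith [sub_eq_slope_mul_sub f m x]

lemma le_secant_of_right_le (hf : ConcaveOn ℝ s f) (hm : m ∈ s) (hM : M ∈ s) (hx : x ∈ s)
    (hmM : m < M) (hMx : M ≤ x) : f x ≤ f m + slope f m M * (x - m) := by
  have hslope : slope f m x ≤ slope f m M :=
    hf.slope_anti hm ⟨hM, hmM.ne'⟩ ⟨hx, (hmM.trans_le hMx).ne'⟩ hMx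
  nlinarith [sub_eq_slope_mul_sub f m x]

end ConcaveOn

lemma Finset.sum_le_sum_of_separating_line {ι : Type*} {t : Finset ι} {a b : ι → ℝ}
    {f : ℝ → ℝ} {m c : ℝ} (hsum : ∑ i ∈ t, a i = ∑ i ∈ t, b i)
    (ha : ∀ i ∈ t, f (a i) ≤ f m + c * (a i - m))
    (hb : ∀ i ∈ t, f m + c * (b i - m) ≤ f (b i)) :
    ∑ i ∈ t, f (a i) ≤ ∑ i ∈ t, f (b i) := by
  have hline : ∑ i ∈ t, (f m + c * (a i - m)) = ∑ i ∈ t, (f m + c * (b i - m)) := by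
    simp only [sum_add_distrib, ← mul_sum, sum_sub_distrib, hsum]
  calc ∑ i ∈ t, f (a i) ≤ ∑ i ∈ t, (f m + c * (a i - m)) := sum_le_sum ha
    _ = ∑ i ∈ t, (f m + c * (b i - m)) := hline
    _ ≤ ∑ i ∈ t, f (b i) := sum_le_sum hb

lemma Finset.prod_le_prod_of_log_separating_line {ι : Type*} {t : Finset ι} {a b : ι → ℝ}
    {m c : ℝ} (hapos : ∀ i ∈ t, 0 < a i) (hbpos : ∀ i ∈ t, 0 < b i)
    (hsum : ∑ i ∈ t, a i = ∑ i ∈ t, b i)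
    (ha : ∀ i ∈ t, Real.log (a i) ≤ Real.log m + c * (a i - m))
    (hb : ∀ i ∈ t, Real.log m + c * (b i - m) ≤ Real.log (b i)) :
    ∏ i ∈ t, a i ≤ ∏ i ∈ t, b i := by
  rw [← Real.log_le_log_iff (prod_pos hapos) (prod_pos hbpos),
    Real.log_prod fun i hi => (hapos i hi).ne', Real.log_prod fun i hi => (hbpos i hi).ne']
  exact sum_le_sum_of_separating_line hsum ha hb

lemma Real.log_le_tangent {m x : ℝ} (hm : 0 < m) (hx : 0 < x) :
    Real.log x ≤ Real.log m + m⁻¹ * (x - m) := by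
  have := Real.log_le_sub_one_of_pos (div_pos hx hm)
  rw [Real.log_div hx.ne' hm.ne'] at this
  have hxm : x / m - 1 = m⁻¹ * (x - m) := by field_simp
  linarith

theorem stmt_0_general {n : ℕ} (a b : Fin n → ℝ)
    (hapos : ∀ i, 0 < a i) (hbpos : ∀ i, 0 < b i)
    (hamono : Monotone a)
    (hsum : ∑ i, a i = ∑ i, b i)
    (k : Fin n) (hk : (k : ℕ) + 1 < n)
    (hlow : ∀ i, a k ≤ b i)
    (hhigh : ∀ i, b i ≤ a ⟨(k : ℕ) + 1, hk⟩) :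
    ∏ i, a i ≤ ∏ i, b i := by
  set m := a k
  set M := a ⟨(k : ℕ) + 1, hk⟩
  have hm : 0 < m := hapos k
  have ha_out : ∀ i, a i ≤ m ∨ M ≤ a i := fun i =>
    (le_or_gt (i : ℕ) k).imp (fun h => hamono (Fin.le_def.2 h)) (fun h => hamono (Fin.le_def.2 h))
  rcases (hamono (Fin.le_def.2 (Nat.le_succ k)) : m ≤ M).eq_or_lt with hmM | hmM
  · have hb : ∀ i, b i = m := fun i => le_antisymm ((hhigh i).trans hmM.ge) (hlow i)
    refine prod_le_prod_of_log_separating_line (m := m) (c := m⁻¹) (fun i _ => hapos i)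
      (fun i _ => hbpos i) hsum (fun i _ => Real.log_le_tangent hm (hapos i)) fun i _ => ?_
    simp [hb i]
  · have hlog := StrictConcaveOn.concaveOn strictConcaveOn_log_Ioi
    have hM : M ∈ Set.Ioi 0 := hapos _
    refine prod_le_prod_of_log_separating_line (c := slope Real.log m M) (fun i _ => hapos i)
      (fun i _ => hbpos i) hsum (fun i _ => ?_)
      fun i _ => hlog.secant_le_of_mem_Icc hm hM ⟨hlow i, hhigh i⟩
    rcases ha_out i with h | h
    · exact hlog.le_secant_of_le_left hm hM (hapos i) hmM h
    · exact hlog.le_secant_of_right_le hm hM (hapos i) hmM h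

theorem stmt_0 {n : ℕ} (a b : Fin n → ℝ)
    (hapos : ∀ i, 0 < a i) (hbpos : ∀ i, 0 < b i)
    (hamono : Monotone a) (hbmono : Monotone b)
    (hsum : ∑ i, a i = ∑ i, b i)
    (k : Fin n) (hk : (k : ℕ) + 1 < n)
    (hlow : ∀ i, a k ≤ b i)
    (hhigh : ∀ i, b i ≤ a ⟨(k : ℕ) + 1, hk⟩) :
    ∏ i, a i ≤ ∏ i, b i :=
  stmt_0_general a b hapos hbpos hamono hsum k hk hlow hhigh
end

section
/- For any nonempty finite set S of channels with noise levels N_i > 0 and total power P > 0, there exists a unique water level ν(S) > min_{i∈S} N_i satisfying ∑_{i∈S} (ν(S) − N_i)^+ = P. -/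
/-!
The power `f ν = ∑ᵢ (ν − Nᵢ)⁺` poured at water level `ν` is continuous, vanishes at
`m = minᵢ Nᵢ` and is strictly increasing on `(m, ∞)`, since the channel attaining the minimum
is always filled there. As `f (m + P) ≥ P`, the intermediate value theorem gives a level in
`(m, m + P]` with `f ν = P`, and strict monotonicity makes it unique.
-/

open Finset Set

namespace Waterfilling

variable {ι : Type*} (S : Finset ι) (N : ι → ℝ)

noncomputable def power (ν : ℝ) : ℝ := ∑ i ∈ S, max (ν - N i) 0

theorem continuous_power : Continuous (power S N) :=
  continuous_finsetSum S fun _ _ => (continuous_id.sub continuous_const).max continuous_const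

theorem sub_le_power {i : ι} (hi : i ∈ S) (ν : ℝ) : ν - N i ≤ power S N ν :=
  (le_max_left _ _).trans <|
    single_le_sum (f := fun j => max (ν - N j) 0) (fun _ _ => le_max_right _ _) hi

variable (hS : S.Nonempty)

theorem power_inf' : power S N (S.inf' hS N) = 0 :=
  sum_eq_zero fun _ hi => max_eq_right (sub_nonpos.mpr (S.inf'_le N hi))

theorem strictMonoOn_power : StrictMonoOn (power S N) (Ioi (S.inf' hS N)) := by
  intro a ha b _ hab
  obtain ⟨i₀, hi₀, hmin⟩ := S.exists_mem_eq_inf' hS N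
  rw [Set.mem_Ioi, hmin] at ha
  refine sum_lt_sum (fun _ _ => max_le_max (by linarith) le_rfl) ⟨i₀, hi₀, ?_⟩
  rw [max_eq_left (by linarith), max_eq_left (by linarith)]
  linarith

end Waterfilling

open Waterfilling in
theorem stmt_4_general {ι : Type*} (S : Finset ι) (hS : S.Nonempty)
    (N : ι → ℝ) (P : ℝ) (hP : 0 < P) :
    ∃! ν : ℝ, S.inf' hS N < ν ∧ ∑ i ∈ S, max (ν - N i) 0 = P := by
  set m := S.inf' hS N
  obtain ⟨i₀, hi₀, hmin⟩ := S.exists_mem_eq_inf' hS N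
  have hP_mem : P ∈ Ioc (power S N m) (power S N (m + P)) := by
    rw [power_inf']
    exact ⟨hP, by linarith [sub_le_power S N hi₀ (m + P)]⟩
  obtain ⟨ν, hν, hνP⟩ :=
    intermediate_value_Ioc (by linarith) (continuous_power S N).continuousOn hP_mem
  exact ⟨ν, ⟨hν.1, hνP⟩, fun ν' hν' =>
    (strictMonoOn_power S N hS).injOn hν'.1 hν.1 (hν'.2.trans hνP.symm)⟩

/-- Existence and uniqueness of the water level: there is a unique `ν`,
larger than the minimum noise level, with `∑_{i∈S} (ν − N i)⁺ = P`. -/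
theorem stmt_4 {ι : Type*} [DecidableEq ι] (S : Finset ι) (hS : S.Nonempty)
    (N : ι → ℝ) (hN : ∀ i ∈ S, 0 < N i) (P : ℝ) (hP : 0 < P) :
    ∃! ν : ℝ, S.inf' hS N < ν ∧ ∑ i ∈ S, max (ν - N i) 0 = P :=
  stmt_4_general S hS N P hP
end

section
/- The water level is monotone nonincreasing in the channel set: if S ⊆ S′ are nonempty finite sets of channels, then ν(S′) ≤ ν(S). -/
/-!
The power `waterFill N A t = ∑ i ∈ A, (t - N i)⁺` needed to fill the channels `A` up to level `t`
is monotone in `A`, and strictly increasing in `t` wherever it is positive, since then some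
channel lies below the level. So if `ν S < ν S'`, then
`P = waterFill N S (ν S) < waterFill N S (ν S') ≤ waterFill N S' (ν S') = P`.
-/

open Finset

section WaterFilling

variable {ι α : Type*} [AddCommGroup α] [LinearOrder α] [IsOrderedAddMonoid α]

def waterFill (N : ι → α) (A : Finset ι) (t : α) : α :=
  ∑ i ∈ A, max (t - N i) 0

theorem waterFill_mono_set (N : ι → α) {A B : Finset ι} (hAB : A ⊆ B) (t : α) :
    waterFill N A t ≤ waterFill N B t :=
  sum_le_sum_of_subset_of_nonneg hAB fun _ _ _ => le_max_right _ _

theorem waterFill_lt_of_lt (N : ι → α) (A : Finset ι) {s t : α}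
    (hpos : 0 < waterFill N A s) (hst : s < t) :
    waterFill N A s < waterFill N A t := by
  obtain ⟨i, hiA, hi⟩ : ∃ i ∈ A, (0 : α) < max (s - N i) 0 :=
    exists_lt_of_sum_lt (by rwa [sum_const_zero])
  have hsi : 0 < s - N i := by simpa using hi
  refine sum_lt_sum (fun j _ => max_le_max (sub_le_sub_right hst.le _) le_rfl) ⟨i, hiA, ?_⟩
  calc max (s - N i) 0 = s - N i := max_eq_left hsi.le
    _ < t - N i := sub_lt_sub_right hst _
    _ ≤ max (t - N i) 0 := le_max_left _ _

end WaterFilling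

theorem stmt_5_general {ι : Type*}
    (N : ι → ℝ) (P : ℝ) (hP : 0 < P)
    (ν : Finset ι → ℝ)
    (hν : ∀ A : Finset ι, A.Nonempty → ∑ i ∈ A, max (ν A - N i) 0 = P)
    (S S' : Finset ι) (hSne : S.Nonempty) (hsub : S ⊆ S') :
    ν S' ≤ ν S := by
  by_contra! hlt
  have hS : waterFill N S (ν S) = P := hν S hSne
  have hS' : waterFill N S' (ν S') = P := hν S' (hSne.mono hsub)
  have hraise := waterFill_lt_of_lt N S (hS ▸ hP) hlt
  have henlarge := waterFill_mono_set N hsub (ν S')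
  linarith

/-- The water level is monotone nonincreasing in the channel set. -/
theorem stmt_5 {ι : Type*} [DecidableEq ι]
    (N : ι → ℝ) (hN : ∀ i, 0 < N i) (P : ℝ) (hP : 0 < P)
    (ν : Finset ι → ℝ)
    (hν : ∀ A : Finset ι, A.Nonempty → ∑ i ∈ A, max (ν A - N i) 0 = P)
    (S S' : Finset ι) (hSne : S.Nonempty) (hsub : S ⊆ S') :
    ν S' ≤ ν S :=
  stmt_5_general N P hP ν hν S S' hSne hsub
end

section
/- The waterfilling rate function R*(S) = ∑_{i∈S} log(1 + (ν(S) − N_i)^+ / N_i) is monotone nondecreasing: if S ⊆ S′ then R*(S) ≤ R*(S′). -/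
/-!
Waterfilling on `S'` maximises `∑ log (1 + pᵢ / Nᵢ)` among all nonnegative power allocations
on `S'` with total power `P`: by concavity of `log`, each term lies below its tangent at the
waterfilling power `qᵢ = (ν - Nᵢ)⁺`, whose slope `1 / (Nᵢ + qᵢ)` is `1 / ν` on the active channels
and at most `1 / ν` on the others. The waterfilling allocation of `S`, extended by zero, is one
such allocation.
-/

open Finset Set

theorem log_one_add_div_sub_log_one_add_div_le {N p q : ℝ} (hN : 0 < N) (hp : 0 ≤ p)
    (hq : 0 ≤ q) :
    Real.log (1 + p / N) - Real.log (1 + q / N) ≤ (p - q) / (N + q) := by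
  have hNp : 0 < N + p := by linarith
  have hNq : 0 < N + q := by linarith
  have h_ratio : (1 + p / N) / (1 + q / N) = (N + p) / (N + q) := by field_simp
  calc Real.log (1 + p / N) - Real.log (1 + q / N)
      = Real.log ((N + p) / (N + q)) := by
        rw [← Real.log_div (by positivity) (by positivity), h_ratio]
    _ ≤ (N + p) / (N + q) - 1 := Real.log_le_sub_one_of_pos (by positivity)
    _ = (p - q) / (N + q) := by field_simp; ring

theorem log_one_add_div_le_waterfilling {N p ν : ℝ} (hN : 0 < N) (hp : 0 ≤ p) (hν : 0 < ν) :
    Real.log (1 + p / N) ≤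
      Real.log (1 + max (ν - N) 0 / N) + (p - max (ν - N) 0) / ν := by
  have h_tangent := log_one_add_div_sub_log_one_add_div_le hN hp (le_max_right (ν - N) 0)
  have h_slope : (p - max (ν - N) 0) / (N + max (ν - N) 0) ≤ (p - max (ν - N) 0) / ν := by
    rcases le_total ν N with hνN | hNν
    · rw [max_eq_right (sub_nonpos.mpr hνN), add_zero, sub_zero]
      gcongr
    · rw [max_eq_left (sub_nonneg.mpr hNν), add_sub_cancel]
  linarith

theorem sum_log_one_add_div_le_waterfilling {ι : Type*} {T : Finset ι} {N p : ι → ℝ} {ν : ℝ}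
    (hN : ∀ i ∈ T, 0 < N i) (hp : ∀ i ∈ T, 0 ≤ p i) (hν : 0 < ν)
    (h_budget : ∑ i ∈ T, p i ≤ ∑ i ∈ T, max (ν - N i) 0) :
    ∑ i ∈ T, Real.log (1 + p i / N i) ≤ ∑ i ∈ T, Real.log (1 + max (ν - N i) 0 / N i) :=
  calc ∑ i ∈ T, Real.log (1 + p i / N i)
      ≤ ∑ i ∈ T, (Real.log (1 + max (ν - N i) 0 / N i) + (p i - max (ν - N i) 0) / ν) :=
        sum_le_sum fun i hi => log_one_add_div_le_waterfilling (hN i hi) (hp i hi) hν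
    _ = ∑ i ∈ T, Real.log (1 + max (ν - N i) 0 / N i) +
          (∑ i ∈ T, p i - ∑ i ∈ T, max (ν - N i) 0) / ν := by
        rw [sum_add_distrib, ← sum_div, sum_sub_distrib]
    _ ≤ ∑ i ∈ T, Real.log (1 + max (ν - N i) 0 / N i) := by
        have : (∑ i ∈ T, p i - ∑ i ∈ T, max (ν - N i) 0) / ν ≤ 0 :=
          div_nonpos_of_nonpos_of_nonneg (by linarith) hν.le
        linarith

theorem pos_of_sum_max_sub_pos {ι : Type*} {T : Finset ι} {N : ι → ℝ} {ν : ℝ}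
    (hN : ∀ i ∈ T, 0 < N i) (h : 0 < ∑ i ∈ T, max (ν - N i) 0) : 0 < ν := by
  by_contra! hν
  have h_zero : ∑ i ∈ T, max (ν - N i) 0 = 0 :=
    sum_eq_zero fun i hi => max_eq_right (by linarith [hN i hi])
  linarith

theorem stmt_6_general {ι : Type*}
    (N : ι → ℝ) (hN : ∀ i, 0 < N i) (P : ℝ) (hP : 0 < P)
    (ν : Finset ι → ℝ)
    (hν : ∀ A : Finset ι, A.Nonempty → ∑ i ∈ A, max (ν A - N i) 0 = P)
    (S S' : Finset ι) (hsub : S ⊆ S') :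
    ∑ i ∈ S, Real.log (1 + max (ν S - N i) 0 / N i) ≤
      ∑ i ∈ S', Real.log (1 + max (ν S' - N i) 0 / N i) := by
  rcases S.eq_empty_or_nonempty with rfl | hS
  · rw [sum_empty]
    exact sum_nonneg fun i _ =>
      Real.log_nonneg (le_add_of_nonneg_right (div_nonneg (le_max_right _ _) (hN i).le))
  set p := (S : Set ι).indicator fun i => max (ν S - N i) 0
  have hS' : S'.Nonempty := hS.mono hsub
  have h_level : 0 < ν S' := pos_of_sum_max_sub_pos (fun i _ => hN i) (hν S' hS' ▸ hP)
  have h_budget : ∑ i ∈ S', p i = ∑ i ∈ S', max (ν S' - N i) 0 := by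
    rw [sum_indicator_subset _ hsub, hν S hS, hν S' hS']
  rw [← sum_indicator_subset_of_eq_zero _ (fun i x => Real.log (1 + x / N i)) hsub (by simp)]
  exact sum_log_one_add_div_le_waterfilling (fun i _ => hN i)
    (fun i _ => indicator_nonneg (fun _ _ => le_max_right _ _) i) h_level h_budget.le

/-- The waterfilling rate `R*(S) = ∑_{i∈S} log(1 + (ν(S) − N i)⁺ / N i)`
is monotone nondecreasing in the channel set. -/
theorem stmt_6 {ι : Type*} [DecidableEq ι]
    (N : ι → ℝ) (hN : ∀ i, 0 < N i) (P : ℝ) (hP : 0 < P)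
    (ν : Finset ι → ℝ)
    (hν : ∀ A : Finset ι, A.Nonempty → ∑ i ∈ A, max (ν A - N i) 0 = P)
    (S S' : Finset ι) (hsub : S ⊆ S') :
    ∑ i ∈ S, Real.log (1 + max (ν S - N i) 0 / N i) ≤
      ∑ i ∈ S', Real.log (1 + max (ν S' - N i) 0 / N i) :=
  stmt_6_general N hN P hP ν hν S S' hsub
end

section
/- If i,j ∉ S are distinct and i ∉ T(S∪{i,j}) (i.e., channel i receives zero power in the waterfilling over S∪{i,j}), then ν(S∪{i,j}) = ν(S∪{j}) and R*(S∪{i,j}) = R*(S∪{j}). -/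
open Finset

/-! A channel below the water level receives no power, so dropping it leaves the waterfilling
equation unchanged; since the total power `x ↦ ∑ max (x - N k) 0` is strictly increasing wherever
it is positive, the water level is the unique solution of that equation. -/

theorem sum_max_sub_lt_sum_max_sub {ι : Type*} (N : ι → ℝ) (B : Finset ι) {x y : ℝ}
    (hxy : x < y) (hpos : 0 < ∑ k ∈ B, max (y - N k) 0) :
    ∑ k ∈ B, max (x - N k) 0 < ∑ k ∈ B, max (y - N k) 0 := by
  obtain ⟨k, hkB, hk⟩ := exists_lt_of_sum_lt (f := fun _ => (0 : ℝ)) (by simpa using hpos)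
  refine sum_lt_sum (fun l _ => max_le_max (by linarith) le_rfl) ⟨k, hkB, ?_⟩
  exact max_lt (by linarith [le_max_left (y - N k) 0]) hk

theorem eq_of_sum_max_sub_eq {ι : Type*} {N : ι → ℝ} {B : Finset ι} {x y P : ℝ} (hP : 0 < P)
    (hx : ∑ k ∈ B, max (x - N k) 0 = P) (hy : ∑ k ∈ B, max (y - N k) 0 = P) : x = y := by
  rcases lt_trichotomy x y with h | h | h
  · linarith [sum_max_sub_lt_sum_max_sub N B h (hy ▸ hP)]
  · exact h
  · linarith [sum_max_sub_lt_sum_max_sub N B h (hx ▸ hP)]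

theorem stmt_13_general {ι : Type*} [DecidableEq ι]
    (N : ι → ℝ) (P : ℝ) (hP : 0 < P)
    (ν : Finset ι → ℝ)
    (hν : ∀ A : Finset ι, A.Nonempty → ∑ i ∈ A, max (ν A - N i) 0 = P)
    (S : Finset ι) (i j : ι) (hij : i ≠ j)
    (hi : i ∉ S)
    (hzero : ¬ N i < ν (insert i (insert j S))) :
    ν (insert i (insert j S)) = ν (insert j S) ∧
    (∑ k ∈ (insert i (insert j S)).filter
        (fun k => N k < ν (insert i (insert j S))),
      Real.log (ν (insert i (insert j S)) / N k)) =
    (∑ k ∈ (insert j S).filter (fun k => N k < ν (insert j S)),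
      Real.log (ν (insert j S) / N k)) := by
  have hiB : i ∉ insert j S := by simp [hij, hi]
  have hsum : ∑ k ∈ insert j S, max (ν (insert i (insert j S)) - N k) 0 = P := by
    have h := hν _ (insert_nonempty i (insert j S))
    rwa [sum_insert hiB, max_eq_right (by linarith [not_lt.mp hzero]), zero_add] at h
  have hlevel : ν (insert i (insert j S)) = ν (insert j S) :=
    eq_of_sum_max_sub_eq hP hsum (hν _ (insert_nonempty j S))
  refine ⟨hlevel, ?_⟩
  rw [filter_insert, if_neg hzero, hlevel]

/-- If channel `i` receives zero power in the waterfilling over `S∪{i,j}`,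
then `ν(S∪{i,j}) = ν(S∪{j})` and `R*(S∪{i,j}) = R*(S∪{j})`. -/
theorem stmt_13 {ι : Type*} [DecidableEq ι]
    (N : ι → ℝ) (hN : ∀ i, 0 < N i) (P : ℝ) (hP : 0 < P)
    (ν : Finset ι → ℝ)
    (hν : ∀ A : Finset ι, A.Nonempty → ∑ i ∈ A, max (ν A - N i) 0 = P)
    (S : Finset ι) (hS : S.Nonempty) (i j : ι) (hij : i ≠ j)
    (hi : i ∉ S) (hj : j ∉ S)
    (hzero : ¬ N i < ν (insert i (insert j S))) :
    ν (insert i (insert j S)) = ν (insert j S) ∧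
    (∑ k ∈ (insert i (insert j S)).filter
        (fun k => N k < ν (insert i (insert j S))),
      Real.log (ν (insert i (insert j S)) / N k)) =
    (∑ k ∈ (insert j S).filter (fun k => N k < ν (insert j S)),
      Real.log (ν (insert j S) / N k)) :=
  stmt_13_general N P hP ν hν S i j hij hi hzero
end

section
/- With the notation T_i = T(S∪{i}), T_j = T(S∪{j}), T = T(S), T_{ij} = T(S∪{i,j}), Ĥ = T∖T_j, Ĥ_i = (T_i∖{i})∖(T_{ij}∖{i,j}), and assuming i ∈ T_i, j ∈ T_j, i,j ∈ T_{ij}: |T_i|ν_i + |T_j|ν_j + ∑_{l∈Ĥ} N_l = |T|ν + |T_{ij}|ν_{ij} + ∑_{m∈Ĥ_i} N_m, and |T_i| + |T_j| + |Ĥ| = |T| + |T_{ij}| + |Ĥ_i|. -/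
/-!
Adding a channel `a` that ends up active cannot raise the water level: otherwise every old
channel would receive at least as much power as before and `a` some more, exceeding `P`.
Hence `T(A ∪ {a}) \ T(A) = {a}`, which gives `T_j \ T = {j}` and `T_{ij} \ T_i = {j}`, while
`Ĥ_i = T_i \ T_{ij}`. Writing `|T(A)| ν(A) = P + ∑_{T(A)} N`, both identities reduce to
`∑_B f + ∑_{A \ B} f = ∑_A f + ∑_{B \ A} f`, applied to `f = N` and `f = 1`.
-/

open Finset

/-- The set of channels receiving nonzero power. -/
noncomputable def Tset {ι : Type*} [DecidableEq ι] (N : ι → ℝ) (ν : Finset ι → ℝ)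
    (A : Finset ι) : Finset ι :=
  A.filter (fun k => N k < ν A)

theorem Finset.sum_add_sum_sdiff_eq_sum_add_sum_sdiff {ι M : Type*} [DecidableEq ι]
    [AddCommMonoid M] (A B : Finset ι) (f : ι → M) :
    ∑ k ∈ B, f k + ∑ k ∈ A \ B, f k = ∑ k ∈ A, f k + ∑ k ∈ B \ A, f k := by
  rw [← sum_inter_add_sum_sdiff B A, ← sum_inter_add_sum_sdiff A B, inter_comm]
  abel

theorem Finset.sum_add_sum_add_sum_sdiff_eq_of_sdiff_eq_singleton {ι M : Type*}
    [DecidableEq ι] [AddCommMonoid M] {A B C D : Finset ι} {a : ι}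
    (hBA : B \ A = {a}) (hDC : D \ C = {a}) (f : ι → M) :
    ∑ k ∈ C, f k + ∑ k ∈ B, f k + ∑ k ∈ A \ B, f k
      = ∑ k ∈ A, f k + ∑ k ∈ D, f k + ∑ k ∈ C \ D, f k := by
  have hAB := sum_add_sum_sdiff_eq_sum_add_sum_sdiff A B f
  have hCD := sum_add_sum_sdiff_eq_sum_add_sum_sdiff C D f
  rw [hBA, sum_singleton] at hAB
  rw [hDC, sum_singleton] at hCD
  rw [add_assoc, hAB, add_assoc _ (∑ k ∈ D, f k), hCD]
  abel

theorem Finset.sdiff_singleton_sdiff_sdiff_pair {ι : Type*} [DecidableEq ι]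
    {A B : Finset ι} {i j : ι} (hi : i ∈ B) (hj : j ∉ A) :
    (A \ {i}) \ (B \ {i, j}) = A \ B := by
  ext k
  simp only [mem_sdiff, mem_singleton, mem_insert]
  constructor
  · rintro ⟨⟨hkA, hki⟩, hkB⟩
    exact ⟨hkA, fun h => hkB ⟨h, by rintro (rfl | rfl) <;> trivial⟩⟩
  · rintro ⟨hkA, hkB⟩
    exact ⟨⟨hkA, by rintro rfl; exact hkB hi⟩, fun h => hkB h.1⟩

section WaterFilling

variable {ι : Type*} [DecidableEq ι] {N : ι → ℝ} {ν : Finset ι → ℝ}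

theorem Tset_subset (A : Finset ι) : Tset N ν A ⊆ A :=
  filter_subset _ _

theorem sum_max_sub_zero_eq_sum_Tset (A : Finset ι) :
    ∑ k ∈ A, max (ν A - N k) 0 = ∑ k ∈ Tset N ν A, (ν A - N k) := by
  rw [Tset, sum_filter]
  refine sum_congr rfl fun k _ => ?_
  split_ifs with h
  · exact max_eq_left (sub_nonneg.mpr h.le)
  · exact max_eq_right (sub_nonpos.mpr (not_lt.mp h))

variable {P : ℝ} (hν : ∀ A : Finset ι, A.Nonempty → ∑ i ∈ A, max (ν A - N i) 0 = P)
include hν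

theorem card_Tset_mul_eq {A : Finset ι} (hA : A.Nonempty) :
    ((Tset N ν A).card : ℝ) * ν A = P + ∑ k ∈ Tset N ν A, N k := by
  have h := hν A hA
  rw [sum_max_sub_zero_eq_sum_Tset, sum_sub_distrib, sum_const, nsmul_eq_mul] at h
  linarith

theorem waterLevel_insert_le {A : Finset ι} (hA : A.Nonempty) {a : ι} (ha : a ∉ A)
    (haT : a ∈ Tset N ν (insert a A)) : ν (insert a A) ≤ ν A := by
  by_contra! hlt
  have hNa : N a < ν (insert a A) := (mem_filter.mp haT).2
  have hold : P ≤ ∑ k ∈ A, max (ν (insert a A) - N k) 0 := by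
    rw [← hν A hA]
    exact sum_le_sum fun k _ => max_le_max (by linarith) le_rfl
  have hnew := hν (insert a A) (insert_nonempty _ _)
  rw [sum_insert ha, max_eq_left (by linarith)] at hnew
  linarith

theorem Tset_insert_sdiff_Tset {A : Finset ι} (hA : A.Nonempty) {a : ι} (ha : a ∉ A)
    (haT : a ∈ Tset N ν (insert a A)) : Tset N ν (insert a A) \ Tset N ν A = {a} := by
  have hle := waterLevel_insert_le hν hA ha haT
  ext k
  simp only [Tset, mem_sdiff, mem_filter, mem_insert, mem_singleton]
  constructor
  · rintro ⟨⟨hk | hkA, hkN⟩, hkT⟩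
    · exact hk
    · exact absurd ⟨hkA, hkN.trans_le hle⟩ hkT
  · rintro rfl
    exact ⟨⟨Or.inl rfl, (mem_filter.mp haT).2⟩, fun h => ha h.1⟩

end WaterFilling

theorem stmt_15_general {ι : Type*} [DecidableEq ι]
    (N : ι → ℝ) (P : ℝ)
    (ν : Finset ι → ℝ)
    (hν : ∀ A : Finset ι, A.Nonempty → ∑ i ∈ A, max (ν A - N i) 0 = P)
    (S : Finset ι) (hS : S.Nonempty) (i j : ι) (hij : i ≠ j)
    (hj : j ∉ S)
    (hjTj : j ∈ Tset N ν (insert j S))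
    (hiTij : i ∈ Tset N ν (insert i (insert j S)))
    (hjTij : j ∈ Tset N ν (insert i (insert j S))) :
    (((Tset N ν (insert i S)).card : ℝ) * ν (insert i S)
      + ((Tset N ν (insert j S)).card : ℝ) * ν (insert j S)
      + ∑ l ∈ Tset N ν S \ Tset N ν (insert j S), N l
      = ((Tset N ν S).card : ℝ) * ν S
      + ((Tset N ν (insert i (insert j S))).card : ℝ) * ν (insert i (insert j S))
      + ∑ m ∈ (Tset N ν (insert i S) \ {i})
            \ (Tset N ν (insert i (insert j S)) \ {i, j}), N m) ∧
    ((Tset N ν (insert i S)).card + (Tset N ν (insert j S)).card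
      + (Tset N ν S \ Tset N ν (insert j S)).card
      = (Tset N ν S).card + (Tset N ν (insert i (insert j S))).card
      + ((Tset N ν (insert i S) \ {i})
            \ (Tset N ν (insert i (insert j S)) \ {i, j})).card) := by
  have hjiS : j ∉ insert i S := by simp [hij.symm, hj]
  have hswap : insert i (insert j S) = insert j (insert i S) := insert_comm i j S
  have hT_j := Tset_insert_sdiff_Tset hν hS hj hjTj
  have hT_ij : Tset N ν (insert i (insert j S)) \ Tset N ν (insert i S) = {j} := by
    rw [hswap] at hjTij ⊢
    exact Tset_insert_sdiff_Tset hν (insert_nonempty _ _) hjiS hjTij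
  rw [sdiff_singleton_sdiff_sdiff_pair hiTij fun h => hjiS (Tset_subset _ h)]
  refine ⟨?_, by simpa only [card_eq_sum_ones] using
    sum_add_sum_add_sum_sdiff_eq_of_sdiff_eq_singleton hT_j hT_ij fun _ => 1⟩
  have hsum := sum_add_sum_add_sum_sdiff_eq_of_sdiff_eq_singleton hT_j hT_ij N
  rw [card_Tset_mul_eq hν hS, card_Tset_mul_eq hν (insert_nonempty i S),
    card_Tset_mul_eq hν (insert_nonempty j S), card_Tset_mul_eq hν (insert_nonempty _ _)]
  linarith

/-- Counting and sum identities for the sets of active channels. -/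
theorem stmt_15 {ι : Type*} [DecidableEq ι]
    (N : ι → ℝ) (hN : ∀ i, 0 < N i) (P : ℝ) (hP : 0 < P)
    (ν : Finset ι → ℝ)
    (hν : ∀ A : Finset ι, A.Nonempty → ∑ i ∈ A, max (ν A - N i) 0 = P)
    (S : Finset ι) (hS : S.Nonempty) (i j : ι) (hij : i ≠ j)
    (hi : i ∉ S) (hj : j ∉ S)
    (hiTi : i ∈ Tset N ν (insert i S))
    (hjTj : j ∈ Tset N ν (insert j S))
    (hiTij : i ∈ Tset N ν (insert i (insert j S)))
    (hjTij : j ∈ Tset N ν (insert i (insert j S))) :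
    (((Tset N ν (insert i S)).card : ℝ) * ν (insert i S)
      + ((Tset N ν (insert j S)).card : ℝ) * ν (insert j S)
      + ∑ l ∈ Tset N ν S \ Tset N ν (insert j S), N l
      = ((Tset N ν S).card : ℝ) * ν S
      + ((Tset N ν (insert i (insert j S))).card : ℝ) * ν (insert i (insert j S))
      + ∑ m ∈ (Tset N ν (insert i S) \ {i})
            \ (Tset N ν (insert i (insert j S)) \ {i, j}), N m) ∧
    ((Tset N ν (insert i S)).card + (Tset N ν (insert j S)).card
      + (Tset N ν S \ Tset N ν (insert j S)).card
      = (Tset N ν S).card + (Tset N ν (insert i (insert j S))).card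
      + ((Tset N ν (insert i S) \ {i})
            \ (Tset N ν (insert i (insert j S)) \ {i, j})).card) :=
  stmt_15_general N P ν hν S hS i j hij hj hjTj hiTij hjTij
end

section
/- Under the assumptions i,j ∈ T(S∪{i,j}) and ν_i ≤ ν_j, the inequality ν_i^{|T_i|} · ν_j^{|T_j|} · ∏_{l∈Ĥ} N_l ≥ ν^{|T|} · ν_{ij}^{|T_{ij}|} · ∏_{m∈Ĥ_i} N_m holds, where Ĥ = T∖T_j and Ĥ_i = (T_i∖{i})∖(T_{ij}∖{i,j}). -/
open Finset

/-!
Write `p_n(x) = (x - n)⁺` for the power and `r_n(x) = log⁺ (x / n)` for the rate of a channel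
with noise `n` at water level `x`. On `[y, x]` the derivative of `r_n` is that of `p_n` times
`1 / t ∈ [1 / x, 1 / y]`, so summing over a set of channels squeezes the change of total rate
between the change of total power divided by `x` and by `y`. When `j` joins a set `X`, the
level drops from `x = ν X` to `y = ν (X ∪ {j})` while the total power stays `P`; the power
released by `X` is `p_{N_j}(y)`, so the marginal gain of `j` lies between
`r(y) - p(y) / y` and `r(y) - p(y) / x` (with `r = r_{N_j}`, `p = p_{N_j}`). For
`ν(S∪{i,j}) ≤ ν(S∪{i}) ≤ ν(S∪{j}) ≤ ν(S)` the upper bound at `S ∪ {i}` is below the lower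
bound at `S`, which is submodularity; exponentiating and cancelling the noise products of the
active sets gives the product form.
-/

noncomputable section

def channelPower (n x : ℝ) : ℝ := max (x - n) 0

-- `log (1 + p / n)` for the power `p = channelPower n x`, in nats and without the factor `1 / 2`.
def channelRate (n x : ℝ) : ℝ := Real.log (max x n / n)

section Channel

variable {n x y : ℝ}

theorem channelPower_sub_channelPower :
    channelPower n x - channelPower n y = max x n - max y n := by
  simp only [channelPower, ← sub_self n, max_sub_sub_right]
  ring

theorem channelRate_sub_channelRate (hn : 0 < n) :
    channelRate n x - channelRate n y = Real.log (max x n / max y n) := by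
  have hx : 0 < max x n := lt_max_of_lt_right hn
  have hy : 0 < max y n := lt_max_of_lt_right hn
  rw [channelRate, channelRate, ← Real.log_div (by positivity) (by positivity),
    div_div_div_cancel_right₀ hn.ne']

theorem channelRate_sub_le (hn : 0 < n) (hy : 0 < y) (hyx : y ≤ x) :
    channelRate n x - channelRate n y ≤ (channelPower n x - channelPower n y) / y := by
  have hz : 0 < max y n := lt_max_of_lt_right hn
  have hzw : max y n ≤ max x n := max_le_max_right n hyx
  rw [channelRate_sub_channelRate hn, channelPower_sub_channelPower]
  calc Real.log (max x n / max y n) ≤ max x n / max y n - 1 :=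
        Real.log_le_sub_one_of_pos (by positivity)
    _ = (max x n - max y n) / max y n := by field_simp
    _ ≤ (max x n - max y n) / y :=
        div_le_div_of_nonneg_left (sub_nonneg.2 hzw) hy (le_max_left y n)

theorem le_channelRate_sub (hn : 0 < n) (hy : 0 < y) (hyx : y ≤ x) :
    (channelPower n x - channelPower n y) / x ≤ channelRate n x - channelRate n y := by
  rw [channelRate_sub_channelRate hn, channelPower_sub_channelPower]
  rcases le_total n x with hnx | hxn
  · have hx : 0 < x := hy.trans_le hyx
    have hz : 0 < max y n := lt_max_of_lt_right hn
    have hw : max x n = x := max_eq_left hnx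
    have := Real.one_sub_inv_le_log_of_pos (x := x / max y n) (by positivity)
    rw [hw]
    calc (x - max y n) / x = 1 - (x / max y n)⁻¹ := by rw [inv_div, one_sub_div hx.ne']
      _ ≤ _ := this
  · rw [max_eq_right hxn, max_eq_right (hyx.trans hxn)]
    simp

end Channel

section Total

variable {ι : Type*} {N : ι → ℝ} {A B : Finset ι} {j : ι} {x y : ℝ}

def totalPower (N : ι → ℝ) (x : ℝ) (A : Finset ι) : ℝ := ∑ k ∈ A, channelPower (N k) x

def totalRate (N : ι → ℝ) (x : ℝ) (A : Finset ι) : ℝ := ∑ k ∈ A, channelRate (N k) x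

theorem totalRate_sub_le (hN : ∀ k ∈ A, 0 < N k) (hy : 0 < y) (hyx : y ≤ x) :
    totalRate N x A - totalRate N y A ≤ (totalPower N x A - totalPower N y A) / y := by
  simp only [totalRate, totalPower, ← sum_sub_distrib, sum_div]
  exact sum_le_sum fun k hk => channelRate_sub_le (hN k hk) hy hyx

theorem le_totalRate_sub (hN : ∀ k ∈ A, 0 < N k) (hy : 0 < y) (hyx : y ≤ x) :
    (totalPower N x A - totalPower N y A) / x ≤ totalRate N x A - totalRate N y A := by
  simp only [totalRate, totalPower, ← sum_sub_distrib, sum_div]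
  exact sum_le_sum fun k hk => le_channelRate_sub (hN k hk) hy hyx

theorem totalPower_lt_totalPower (hxy : x < y) (hpos : 0 < totalPower N x A) :
    totalPower N x A < totalPower N y A := by
  have hpos' : ∑ k ∈ A, (0 : ℝ) < ∑ k ∈ A, channelPower (N k) x := by
    simpa [totalPower] using hpos
  obtain ⟨k, hk, hNk⟩ := exists_lt_of_sum_lt hpos'
  refine sum_lt_sum (fun l _ => max_le_max_right 0 (by linarith)) ⟨k, hk, ?_⟩
  have : N k < x := by simpa [channelPower] using hNk
  simp only [channelPower]
  rw [max_eq_left (by linarith), max_eq_left (by linarith)]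
  linarith

theorem totalPower_mono (hAB : A ⊆ B) : totalPower N x A ≤ totalPower N x B :=
  sum_le_sum_of_subset_of_nonneg hAB fun _ _ _ => le_max_right _ _

theorem le_of_totalPower_eq (hAB : A ⊆ B) (hpos : 0 < totalPower N x A)
    (heq : totalPower N x A = totalPower N y B) : y ≤ x := by
  by_contra! hxy
  have := totalPower_lt_totalPower hxy hpos
  have := totalPower_mono (N := N) (x := y) hAB
  linarith

variable [DecidableEq ι]

theorem totalRate_insert_sub_le (hj : j ∉ A) (hN : ∀ k ∈ A, 0 < N k) (hy : 0 < y)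
    (hyx : y ≤ x) (hP : totalPower N x A = totalPower N y (insert j A)) :
    totalRate N y (insert j A) - totalRate N x A
      ≤ channelRate (N j) y - channelPower (N j) y / x := by
  have hrate : totalRate N y (insert j A) = channelRate (N j) y + totalRate N y A := sum_insert hj
  have hpow : totalPower N y (insert j A) = channelPower (N j) y + totalPower N y A := sum_insert hj
  have := le_totalRate_sub hN hy hyx
  rw [hP, hpow, add_sub_cancel_right] at this
  linarith

theorem le_totalRate_insert_sub (hj : j ∉ A) (hN : ∀ k ∈ A, 0 < N k) (hy : 0 < y)
    (hyx : y ≤ x) (hP : totalPower N x A = totalPower N y (insert j A)) :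
    channelRate (N j) y - channelPower (N j) y / y
      ≤ totalRate N y (insert j A) - totalRate N x A := by
  have hrate : totalRate N y (insert j A) = channelRate (N j) y + totalRate N y A := sum_insert hj
  have hpow : totalPower N y (insert j A) = channelPower (N j) y + totalPower N y A := sum_insert hj
  have := totalRate_sub_le hN hy hyx
  rw [hP, hpow, add_sub_cancel_right] at this
  linarith

theorem totalRate_insert_sub_le_totalRate_insert_sub (hN : ∀ k, 0 < N k) (hjA : j ∉ A)
    (hjB : j ∉ B) {a b c d : ℝ} (hc : 0 < c) (hca : c ≤ a) (hab : a ≤ b) (hbd : b ≤ d)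
    (hA : totalPower N d A = totalPower N b (insert j A))
    (hB : totalPower N a B = totalPower N c (insert j B)) :
    totalRate N c (insert j B) - totalRate N a B
      ≤ totalRate N b (insert j A) - totalRate N d A := by
  have ha : 0 < a := hc.trans_le hca
  have hpow : 0 ≤ channelPower (N j) c := le_max_right _ _
  calc totalRate N c (insert j B) - totalRate N a B
      ≤ channelRate (N j) c - channelPower (N j) c / a :=
        totalRate_insert_sub_le hjB (fun k _ => hN k) hc hca hB
    _ ≤ channelRate (N j) c - channelPower (N j) c / b := by gcongr
    _ ≤ channelRate (N j) b - channelPower (N j) b / b := by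
        have := le_channelRate_sub (hN j) hc (hca.trans hab)
        rw [sub_div] at this
        linarith
    _ ≤ totalRate N b (insert j A) - totalRate N d A :=
        le_totalRate_insert_sub hjA (fun k _ => hN k) (ha.trans_le hab) hbd hA

theorem prod_exchange {M : Type*} [CommMonoid M] (f : ι → M) {T Ti Tj Tij : Finset ι} {i j : ι}
    (hij : i ≠ j) (hi : i ∈ Ti) (hj : j ∈ Tj) (hjT : j ∉ T) (hTj : Tj \ {j} ⊆ T)
    (hTij : {i, j} ⊆ Tij) (hA : Tij \ {i, j} ⊆ Ti \ {i}) :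
    (∏ k ∈ T, f k) * (∏ k ∈ Tij, f k) * ∏ k ∈ (Ti \ {i}) \ (Tij \ {i, j}), f k
      = (∏ k ∈ Ti, f k) * (∏ k ∈ Tj, f k) * ∏ k ∈ T \ Tj, f k := by
  have hT : T \ (Tj \ {j}) = T \ Tj := by
    ext k
    by_cases hk : k = j <;> simp_all
  rw [← prod_sdiff hTj, hT, ← prod_sdiff hTij, prod_pair hij,
    prod_eq_mul_prod_sdiff_singleton_of_mem hi, ← prod_sdiff hA,
    prod_eq_mul_prod_sdiff_singleton_of_mem hj]
  ac_rfl

end Total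

section Tset

variable {ι : Type*} [DecidableEq ι] {N : ι → ℝ} {ν : Finset ι → ℝ} {A : Finset ι}

theorem mem_Tset_of_le {B : Finset ι} {k : ι} (hk : k ∈ Tset N ν B) (hkA : k ∈ A)
    (h : ν B ≤ ν A) : k ∈ Tset N ν A :=
  mem_filter.2 ⟨hkA, (mem_filter.1 hk).2.trans_le h⟩

theorem pow_card_Tset (hN : ∀ k ∈ A, 0 < N k) :
    ν A ^ (Tset N ν A).card = Real.exp (totalRate N (ν A) A) * ∏ k ∈ Tset N ν A, N k := by
  have hexp : Real.exp (totalRate N (ν A) A) = ∏ k ∈ Tset N ν A, ν A / N k := by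
    rw [totalRate, Real.exp_sum, Tset, prod_filter]
    refine prod_congr rfl fun k hk => ?_
    have hNk := hN k hk
    rw [channelRate, Real.exp_log (by positivity)]
    split_ifs with h
    · rw [max_eq_left h.le]
    · rw [max_eq_right (not_lt.1 h), div_self hNk.ne']
  have hTN : ∀ k ∈ Tset N ν A, N k ≠ 0 := fun k hk => (hN k (mem_filter.1 hk).1).ne'
  rw [hexp, ← prod_mul_distrib, prod_congr rfl fun k hk => div_mul_cancel₀ (ν A) (hTN k hk),
    prod_const]

theorem prod_Tset_exchange {S : Finset ι} {i j : ι} (hij : i ≠ j) (hj : j ∉ S)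
    (hiTij : i ∈ Tset N ν (insert i (insert j S)))
    (hjTij : j ∈ Tset N ν (insert i (insert j S)))
    (hca : ν (insert i (insert j S)) ≤ ν (insert i S))
    (hcb : ν (insert i (insert j S)) ≤ ν (insert j S)) (hbd : ν (insert j S) ≤ ν S) :
    (∏ k ∈ Tset N ν S, N k) * (∏ k ∈ Tset N ν (insert i (insert j S)), N k)
        * ∏ k ∈ (Tset N ν (insert i S) \ {i}) \ (Tset N ν (insert i (insert j S)) \ {i, j}),
            N k
      = (∏ k ∈ Tset N ν (insert i S), N k) * (∏ k ∈ Tset N ν (insert j S), N k)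
        * ∏ k ∈ Tset N ν S \ Tset N ν (insert j S), N k := by
  refine prod_exchange N hij (mem_Tset_of_le hiTij (mem_insert_self i S) hca)
    (mem_Tset_of_le hjTij (mem_insert_self j S) hcb) (fun h => hj (mem_filter.1 h).1)
    (fun k hk => ?_) (insert_subset_iff.2 ⟨hiTij, singleton_subset_iff.2 hjTij⟩)
    (fun k hk => ?_)
  · obtain ⟨hkT, hkj⟩ := mem_sdiff.1 hk
    have hkS : k ∈ S := (mem_insert.1 (mem_filter.1 hkT).1).resolve_left (by simpa using hkj)
    exact mem_Tset_of_le hkT hkS hbd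
  · obtain ⟨hkT, hkij⟩ := mem_sdiff.1 hk
    have hkS : k ∈ S := by
      have := (mem_filter.1 hkT).1
      simp only [mem_insert, mem_singleton] at this hkij
      tauto
    exact mem_sdiff.2 ⟨mem_Tset_of_le hkT (mem_insert_of_mem hkS) hca,
      fun h => hkij (by simp [mem_singleton.1 h])⟩

end Tset

end

theorem stmt_16_general {ι : Type*} [DecidableEq ι]
    (N : ι → ℝ) (hN : ∀ i, 0 < N i) (P : ℝ) (hP : 0 < P)
    (ν : Finset ι → ℝ)
    (hν : ∀ A : Finset ι, A.Nonempty → ∑ i ∈ A, max (ν A - N i) 0 = P)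
    (S : Finset ι) (hS : S.Nonempty) (i j : ι) (hij : i ≠ j)
    (hj : j ∉ S)
    (hiTij : i ∈ Tset N ν (insert i (insert j S)))
    (hjTij : j ∈ Tset N ν (insert i (insert j S)))
    (hνij : ν (insert i S) ≤ ν (insert j S)) :
    ν S ^ (Tset N ν S).card
      * ν (insert i (insert j S)) ^ (Tset N ν (insert i (insert j S))).card
      * ∏ m ∈ (Tset N ν (insert i S) \ {i})
            \ (Tset N ν (insert i (insert j S)) \ {i, j}), N m
    ≤ ν (insert i S) ^ (Tset N ν (insert i S)).card
      * ν (insert j S) ^ (Tset N ν (insert j S)).card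
      * ∏ l ∈ Tset N ν S \ Tset N ν (insert j S), N l := by
  have hfill : ∀ A : Finset ι, A.Nonempty → totalPower N (ν A) A = P := hν
  have hanti : ∀ {A B : Finset ι}, A.Nonempty → A ⊆ B → ν B ≤ ν A := fun hA hAB =>
    le_of_totalPower_eq hAB (hfill _ hA ▸ hP) ((hfill _ hA).trans (hfill _ (hA.mono hAB)).symm)
  have hca : ν (insert i (insert j S)) ≤ ν (insert i S) :=
    hanti (insert_nonempty _ _) (insert_subset_insert _ (subset_insert _ _))
  have hbd : ν (insert j S) ≤ ν S := hanti hS (subset_insert _ _)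
  have hc : 0 < ν (insert i (insert j S)) := (hN i).trans (mem_filter.1 hiTij).2
  have hfill_ij : totalPower N (ν (insert i (insert j S))) (insert j (insert i S)) = P := by
    rw [insert_comm j i]
    exact hfill _ (insert_nonempty _ _)
  have hrate := totalRate_insert_sub_le_totalRate_insert_sub hN hj
    (by simp [hij.symm, hj]) hc hca hνij hbd
    ((hfill _ hS).trans (hfill _ (insert_nonempty _ _)).symm)
    ((hfill _ (insert_nonempty _ _)).trans hfill_ij.symm)
  rw [insert_comm j i] at hrate
  have hprod := prod_Tset_exchange hij hj hiTij hjTij hca (hca.trans hνij) hbd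
  have hexp : Real.exp (totalRate N (ν S) S)
        * Real.exp (totalRate N (ν (insert i (insert j S))) (insert i (insert j S)))
      ≤ Real.exp (totalRate N (ν (insert i S)) (insert i S))
        * Real.exp (totalRate N (ν (insert j S)) (insert j S)) := by
    rw [← Real.exp_add, ← Real.exp_add, Real.exp_le_exp]
    linarith
  simp only [pow_card_Tset fun k _ => hN k]
  rw [mul_mul_mul_comm (Real.exp _) _ (Real.exp _), mul_mul_mul_comm (Real.exp _) _ (Real.exp _),
    mul_assoc (Real.exp _ * Real.exp _), mul_assoc (Real.exp _ * Real.exp _), hprod]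
  refine mul_le_mul_of_nonneg_right hexp (mul_nonneg (mul_nonneg ?_ ?_) ?_) <;>
    exact prod_nonneg fun k _ => (hN k).le

/-- The key product inequality, equivalent to the four-set submodularity
inequality `R*(S∪{i}) + R*(S∪{j}) ≥ R*(S) + R*(S∪{i,j})`. -/
theorem stmt_16 {ι : Type*} [DecidableEq ι]
    (N : ι → ℝ) (hN : ∀ i, 0 < N i) (P : ℝ) (hP : 0 < P)
    (ν : Finset ι → ℝ)
    (hν : ∀ A : Finset ι, A.Nonempty → ∑ i ∈ A, max (ν A - N i) 0 = P)
    (S : Finset ι) (hS : S.Nonempty) (i j : ι) (hij : i ≠ j)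
    (hi : i ∉ S) (hj : j ∉ S)
    (hiTij : i ∈ Tset N ν (insert i (insert j S)))
    (hjTij : j ∈ Tset N ν (insert i (insert j S)))
    (hνij : ν (insert i S) ≤ ν (insert j S)) :
    ν S ^ (Tset N ν S).card
      * ν (insert i (insert j S)) ^ (Tset N ν (insert i (insert j S))).card
      * ∏ m ∈ (Tset N ν (insert i S) \ {i})
            \ (Tset N ν (insert i (insert j S)) \ {i, j}), N m
    ≤ ν (insert i S) ^ (Tset N ν (insert i S)).card
      * ν (insert j S) ^ (Tset N ν (insert j S)).card
      * ∏ l ∈ Tset N ν S \ Tset N ν (insert j S), N l :=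
  stmt_16_general N hN P hP ν hν S hS i j hij hj hiTij hjTij hνij
end
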